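/- arXiv:1907.12682 — 2 statements merged into one kernel-verified Lean document; each statement's English description precedes it below -/
import Mathlib

section
/- For the conditioned walk \widehat{S}, the process 1/a(\widehat{S}_{n \wedge \widehat{\tau}_{\mathcal{N}}}) is a martingale, where \mathcal{N} is the set of the four neighbours of the origin and \widehat{\tau}_{\mathcal{N}} is the hitting time of \mathcal{N}. Equivalently, 1/a is harmonic for \widehat{P} on \mathbb{Z}^2 \setminus (\mathcal{N} \cup \{0\}). -/
/-! The conditioned walk steps from `x` to each neighbour `y` with probability `a y / (4 a x)`, so
the `P̂`-average of `1 / a` at `x` is `4 · 1 / (4 a x) = 1 / a x` as soon as `a` does not vanish at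
`x` and its neighbours, which holds off the origin. Positivity of `a` is a minimum principle:
passing to the limit in the defining series with `srwP (n + 1) x = (∑_{y ∼ x} srwP n y) / 4`
shows that `a ≥ 0`, that `a` is harmonic off the origin (this needs `srwP N x → 0`, a pigeonhole
argument against total mass `1`), and that `∑_{y ∼ 0} a y = 4 + 4 a 0 > 0`. Positivity then spreads
from a neighbour of the origin around it and outwards by induction on the `ℓ¹` norm. -/

open Filter
open scoped Classical

/-- The two-dimensional integer lattice. -/
abbrev Z2 := ℤ × ℤ

/-- Euclidean norm on `Z2`. -/
noncomputable def nrm (x : Z2) : ℝ := Real.sqrt ((x.1 : ℝ) ^ 2 + (x.2 : ℝ) ^ 2)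

/-- Nearest-neighbour relation on `Z2`. -/
def nbr (x y : Z2) : Prop := (x.1 - y.1).natAbs + (x.2 - y.2).natAbs = 1

/-- `srwP n x = P_x[S_n = 0]`, the n-step probability for the simple random walk on `Z2`
to be at the origin, defined by first-step decomposition. -/
noncomputable def srwP : ℕ → Z2 → ℝ
  | 0, x => if x = 0 then 1 else 0
  | n + 1, x =>
      (srwP n (x + (1, 0)) + srwP n (x - (1, 0)) + srwP n (x + (0, 1)) + srwP n (x - (0, 1))) / 4

/-- `a` is the potential kernel of the 2D simple random walk:
`a x = ∑_{k=0}^∞ (P_0[S_k = 0] - P_x[S_k = 0])` (convergence of the series). -/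
def IsPotentialKernel (a : Z2 → ℝ) : Prop :=
  ∀ x : Z2,
    Tendsto (fun N => ∑ k ∈ Finset.range N, (srwP k 0 - srwP k x)) atTop (nhds (a x))

/-- Transition matrix of the conditioned walk `Ŝ` (Doob h-transform by `a`):
`P̂(x,y) = a(y) / (4 a(x))` when `x ∼ y`, `x ≠ 0`, `y ≠ 0`, and `0` otherwise. -/
noncomputable def Phat (a : Z2 → ℝ) (x y : Z2) : ℝ :=
  if nbr x y ∧ x ≠ 0 ∧ y ≠ 0 then a y / (4 * a x) else 0

/-- n-step transition probabilities of the conditioned walk. -/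
noncomputable def phat (a : Z2 → ℝ) : ℕ → Z2 → Z2 → ℝ
  | 0, x, y => if x = y then 1 else 0
  | n + 1, x, y => ∑' z, Phat a x z * phat a n z y

/-- Green's function of the conditioned walk: expected number of visits to `y` from `x`. -/
noncomputable def Ghat (a : Z2 → ℝ) (x y : Z2) : ℝ := ∑' n, phat a n x y

/-- `hitLE a A n x = P_x[τ̂_A ≤ n]` for the conditioned walk (entrance time, `τ̂_A = min{n ≥ 0 : Ŝ_n ∈ A}`). -/
noncomputable def hitLE (a : Z2 → ℝ) (A : Set Z2) : ℕ → Z2 → ℝ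
  | 0, x => if x ∈ A then 1 else 0
  | n + 1, x => if x ∈ A then 1 else ∑' z, Phat a x z * hitLE a A n z

/-- `hitProb a A x = P_x[τ̂_A < ∞]` for the conditioned walk. -/
noncomputable def hitProb (a : Z2 → ℝ) (A : Set Z2) (x : Z2) : ℝ := ⨆ n, hitLE a A n x

/-- `retLE a A n x = P_x[τ̂⁺_A ≤ n]`, where `τ̂⁺_A = min{n ≥ 1 : Ŝ_n ∈ A}`. -/
noncomputable def retLE (a : Z2 → ℝ) (A : Set Z2) : ℕ → Z2 → ℝ
  | 0, _ => 0
  | n + 1, x => ∑' z, Phat a x z * hitLE a A n z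

/-- `retProb a A x = P_x[τ̂⁺_A < ∞]` for the conditioned walk. -/
noncomputable def retProb (a : Z2 → ℝ) (A : Set Z2) (x : Z2) : ℝ := ⨆ n, retLE a A n x

/-- `beforeLE a A B n x = P_x[τ̂_A ≤ n and τ̂_A < τ̂_B]`. -/
noncomputable def beforeLE (a : Z2 → ℝ) (A B : Set Z2) : ℕ → Z2 → ℝ
  | 0, x => if x ∈ A then 1 else 0
  | n + 1, x =>
      if x ∈ A then 1 else if x ∈ B then 0 else ∑' z, Phat a x z * beforeLE a A B n z

/-- `beforeProb a A B x = P_x[τ̂_A < τ̂_B]` for the conditioned walk. -/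
noncomputable def beforeProb (a : Z2 → ℝ) (A B : Set Z2) (x : Z2) : ℝ := ⨆ n, beforeLE a A B n x

/-- `entLE a A y n x = P_x[τ̂_A ≤ n, Ŝ_{τ̂_A} = y]`. -/
noncomputable def entLE (a : Z2 → ℝ) (A : Set Z2) (y : Z2) : ℕ → Z2 → ℝ
  | 0, x => if x ∈ A ∧ x = y then 1 else 0
  | n + 1, x =>
      if x ∈ A then (if x = y then 1 else 0) else ∑' z, Phat a x z * entLE a A y n z

/-- `entProb a A y x = P_x[τ̂_A < ∞, Ŝ_{τ̂_A} = y]`. -/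
noncomputable def entProb (a : Z2 → ℝ) (A : Set Z2) (y x : Z2) : ℝ := ⨆ n, entLE a A y n x

/-- `visitsGE a y n t x = P_x[#{0 ≤ j ≤ t : Ŝ_j = y} ≥ n]`. -/
noncomputable def visitsGE (a : Z2 → ℝ) (y : Z2) : ℕ → ℕ → Z2 → ℝ
  | 0, _, _ => 1
  | n + 1, 0, x => if x = y ∧ n = 0 then 1 else 0
  | n + 1, t + 1, x =>
      if x = y then ∑' z, Phat a x z * visitsGE a y n t z
      else ∑' z, Phat a x z * visitsGE a y (n + 1) t z

/-- The symmetrized Green's function `ĝ(x,y) = Ĝ(x,y)/a(y)² = (a(x)+a(y)-a(x-y))/(a(x)a(y))`. -/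
noncomputable def ghat (a : Z2 → ℝ) (x y : Z2) : ℝ := (a x + a y - a (x - y)) / (a x * a y)

/-- The discrete disk `B(y, r)` in `Z2`. -/
def diskB (y : Z2) (r : ℝ) : Set Z2 := {z : Z2 | nrm (z - y) ≤ r}

/-- Inner boundary of a set of `Z2`. -/
def innerBd (A : Set Z2) : Set Z2 := {z : Z2 | z ∈ A ∧ ∃ w, nbr z w ∧ w ∉ A}

/-- Distance from a point to a set. -/
noncomputable def distSet (x : Z2) (A : Set Z2) : ℝ := sInf ((fun y => nrm (x - y)) '' A)

/-- Diameter of a set. -/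
noncomputable def diamSet (A : Set Z2) : ℝ :=
  sSup ((fun p : Z2 × Z2 => nrm (p.1 - p.2)) '' (A ×ˢ A))

/-- Escape probability from `y ∈ A` for the conditioned walk: `P_y[τ̂⁺_A = ∞]`. -/
noncomputable def hatEs (a : Z2 → ℝ) (A : Set Z2) (y : Z2) : ℝ :=
  if y ∈ A then 1 - retProb a A y else 0

/-- Capacity of a finite set for the conditioned walk. -/
noncomputable def hatCap (a : Z2 → ℝ) (A : Finset Z2) : ℝ :=
  ∑ y ∈ A, (a y) ^ 2 * hatEs a (↑A) y

/-- Harmonic measure of the conditioned walk on a finite set. -/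
noncomputable def hatHm (a : Z2 → ℝ) (A : Finset Z2) (y : Z2) : ℝ :=
  (a y) ^ 2 * hatEs a (↑A) y / hatCap a A

open Finset Topology

def unitVecs : Finset Z2 := {(1, 0), (-1, 0), (0, 1), (0, -1)}

def nbrs (x : Z2) : Finset Z2 := unitVecs.map (addLeftEmbedding x)

lemma card_nbrs (x : Z2) : #(nbrs x) = 4 := by
  rw [nbrs, card_map]
  rfl

lemma mem_nbrs {x y : Z2} : y ∈ nbrs x ↔ nbr x y := by
  obtain ⟨p, q⟩ := x
  obtain ⟨r, s⟩ := y
  simp only [nbrs, unitVecs, Finset.mem_map, addLeftEmbedding_apply, mem_insert, mem_singleton,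
    nbr]
  constructor
  · rintro ⟨e, he, hy⟩
    rcases he with rfl | rfl | rfl | rfl <;> simp [Prod.ext_iff] at hy <;> omega
  · intro h
    refine ⟨(r - p, s - q), ?_, by simp⟩
    simp only [Prod.ext_iff]
    omega

lemma srwP_succ (n : ℕ) (x : Z2) : srwP (n + 1) x = (∑ y ∈ nbrs x, srwP n y) / 4 := by
  simp [srwP, nbrs, unitVecs, sub_eq_add_neg, add_assoc]

lemma srwP_nonneg (n : ℕ) (x : Z2) : 0 ≤ srwP n x := by
  induction n generalizing x with
  | zero => unfold srwP; positivity
  | succ n ih => rw [srwP_succ]; exact div_nonneg (sum_nonneg fun y _ => ih y) zero_le_four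

lemma sum_srwP_le_one (n : ℕ) (F : Finset Z2) : ∑ x ∈ F, srwP n x ≤ 1 := by
  induction n generalizing F with
  | zero => simp only [srwP, sum_ite_eq']; split_ifs <;> norm_num
  | succ n ih =>
    have hshift : ∀ e : Z2, ∑ x ∈ F, srwP n (x + e) ≤ 1 := fun e => by
      simpa using ih (F.map (addRightEmbedding e))
    calc ∑ x ∈ F, srwP (n + 1) x = (∑ e ∈ unitVecs, ∑ x ∈ F, srwP n (x + e)) / 4 := by
          simp only [srwP_succ, ← sum_div, nbrs, sum_map, addLeftEmbedding_apply]
          rw [sum_comm]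
      _ ≤ (∑ _e ∈ unitVecs, (1 : ℝ)) / 4 :=
          div_le_div_of_nonneg_right (sum_le_sum fun e _ => hshift e) zero_le_four
      _ = 1 := by simp [unitVecs]

lemma sum_range_srwP_le (N : ℕ) (x : Z2) :
    ∑ k ∈ range N, srwP k x ≤ ∑ k ∈ range N, srwP k 0 := by
  induction N generalizing x with
  | zero => simp
  | succ N ih =>
    by_cases hx : x = 0
    · rw [hx]
    have hstep : ∑ k ∈ range N, srwP (k + 1) x ≤ ∑ k ∈ range N, srwP k 0 :=
      calc ∑ k ∈ range N, srwP (k + 1) x = (∑ y ∈ nbrs x, ∑ k ∈ range N, srwP k y) / 4 := by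
            simp only [srwP_succ, ← sum_div]
            rw [sum_comm]
        _ ≤ (∑ _y ∈ nbrs x, ∑ k ∈ range N, srwP k 0) / 4 :=
            div_le_div_of_nonneg_right (sum_le_sum fun y _ => ih y) zero_le_four
        _ = ∑ k ∈ range N, srwP k 0 := by rw [sum_const, card_nbrs]; ring
    rw [sum_range_succ', sum_range_succ]
    have h0 : srwP 0 x = 0 := if_neg hx
    linarith [srwP_nonneg N 0]

/-- Pigeonhole: eventually `p N x₀ ≤ p N y + 1 / M` at `M` points `y`, whose masses add up to at
most `1`, so `p N x₀ ≤ 2 / M`. -/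
lemma tendsto_zero_of_sum_le_one {α : Type*} [Infinite α] {p : ℕ → α → ℝ} {x₀ : α}
    (hnonneg : ∀ N, 0 ≤ p N x₀) (hmass : ∀ N (F : Finset α), ∑ y ∈ F, p N y ≤ 1)
    (hdiff : ∀ y, Tendsto (fun N => p N x₀ - p N y) atTop (𝓝 0)) :
    Tendsto (fun N => p N x₀) atTop (𝓝 0) := by
  refine tendsto_order.2 ⟨fun ε hε => Eventually.of_forall fun N => hε.trans_le (hnonneg N),
    fun ε hε => ?_⟩
  obtain ⟨M, hM⟩ := exists_nat_gt (2 / ε)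
  have hMpos : (0 : ℝ) < M := (div_pos two_pos hε).trans hM
  obtain ⟨F, hF⟩ := Infinite.exists_subset_card_eq α M
  have hclose : ∀ᶠ N in atTop, ∀ y ∈ F, p N x₀ - p N y < 1 / M :=
    (eventually_all_finset F).2 fun y _ => (tendsto_order.1 (hdiff y)).2 _ (by positivity)
  filter_upwards [hclose] with N hN
  have hsum : M * p N x₀ ≤ 2 :=
    calc M * p N x₀ = ∑ _y ∈ F, p N x₀ := by rw [sum_const, hF, nsmul_eq_mul]
      _ ≤ ∑ y ∈ F, (p N y + 1 / M) := sum_le_sum fun y hy => (sub_lt_iff_lt_add'.1 (hN y hy)).le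
      _ ≤ 1 + 1 := by
        rw [sum_add_distrib, sum_const, hF, nsmul_eq_mul, mul_one_div_cancel hMpos.ne']
        exact add_le_add_left (hmass N F) 1
      _ = 2 := one_add_one_eq_two
  calc p N x₀ ≤ 2 / M := by rw [le_div_iff₀ hMpos]; linarith
    _ < ε := by rw [div_lt_iff₀ hMpos]; rwa [div_lt_iff₀ hε, mul_comm] at hM

lemma sum_nbrs_sum_range_sub (N : ℕ) (x : Z2) :
    ∑ y ∈ nbrs x, ∑ k ∈ range N, (srwP k 0 - srwP k y) =
      4 * ∑ k ∈ range N, (srwP k 0 - srwP k x) + 4 * (srwP 0 x - srwP N x) := by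
  rw [sum_comm, ← sum_range_sub' (srwP · x), mul_sum, mul_sum, ← sum_add_distrib]
  refine sum_congr rfl fun k _ => ?_
  rw [sum_sub_distrib, sum_const, card_nbrs, srwP_succ]
  simp only [nsmul_eq_mul, Nat.cast_ofNat]
  ring

def HarmonicOffZero (f : Z2 → ℝ) : Prop := ∀ x ≠ 0, ∑ y ∈ nbrs x, f y = 4 * f x

lemma exists_nbr_natAbs_add_natAbs_eq {x : Z2} {n : ℕ} (hx : x.1.natAbs + x.2.natAbs = n + 1) :
    ∃ y : Z2, nbr x y ∧ y.1.natAbs + y.2.natAbs = n := by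
  obtain ⟨p, q⟩ := x
  rcases lt_trichotomy p 0 with hp | rfl | hp
  · exact ⟨(p + 1, q), by simp only [nbr]; omega, by simp only at hx ⊢; omega⟩
  · rcases le_or_gt q 0 with hq | hq
    · exact ⟨(0, q + 1), by simp only [nbr]; omega, by simp only at hx ⊢; omega⟩
    · exact ⟨(0, q - 1), by simp only [nbr]; omega, by simp only at hx ⊢; omega⟩
  · exact ⟨(p - 1, q), by simp only [nbr]; omega, by simp only at hx ⊢; omega⟩

namespace HarmonicOffZero

variable {f : Z2 → ℝ}

lemma pos_of_nbr_pos (harm : HarmonicOffZero f) (hf : ∀ x, 0 ≤ f x)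
    {x y : Z2} (hx : x ≠ 0) (hxy : nbr x y) (hy : 0 < f y) : 0 < f x := by
  have := single_le_sum (fun z _ => hf z) (mem_nbrs.2 hxy)
  linarith [harm x hx]

/-- Positivity travels a quarter turn around the origin, through the common neighbour
`e + (-e.2, e.1)` of `e` and `(-e.2, e.1)`. -/
lemma pos_rot (harm : HarmonicOffZero f) (hf : ∀ x, 0 ≤ f x)
    {e : Z2} (he : nbr 0 e) (hfe : 0 < f e) : nbr 0 (-e.2, e.1) ∧ 0 < f (-e.2, e.1) := by
  obtain ⟨p, q⟩ := e
  simp only [nbr, Prod.fst_zero, Prod.snd_zero] at he ⊢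
  have hcorner : 0 < f (p - q, q + p) :=
    harm.pos_of_nbr_pos hf (by simp [Prod.ext_iff]; omega) (by simp [nbr]; omega) hfe
  exact ⟨by omega, harm.pos_of_nbr_pos hf (by simp [Prod.ext_iff]; omega) (by simp [nbr]; omega)
    hcorner⟩

lemma pos_of_nbr_zero (harm : HarmonicOffZero f) (hf : ∀ x, 0 ≤ f x)
    (h0 : 0 < ∑ y ∈ nbrs 0, f y) {u : Z2} (hu : nbr 0 u) : 0 < f u := by
  obtain ⟨e, he, hfe⟩ := exists_lt_of_sum_lt (s := nbrs 0) (f := 0) (g := f) (by simpa using h0)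
  obtain ⟨he₁, hf₁⟩ := harm.pos_rot hf (mem_nbrs.1 he) hfe
  obtain ⟨he₂, hf₂⟩ := harm.pos_rot hf he₁ hf₁
  obtain ⟨-, hf₃⟩ := harm.pos_rot hf he₂ hf₂
  have hcycle : u = e ∨ u = (-e.2, e.1) ∨ u = (-e.1, -e.2) ∨ u = (e.2, -e.1) := by
    obtain ⟨p, q⟩ := e
    obtain ⟨r, s⟩ := u
    simp only [mem_nbrs, nbr, Prod.fst_zero, Prod.snd_zero] at he hu
    simp only [Prod.ext_iff]
    omega
  rcases hcycle with rfl | rfl | rfl | rfl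
  exacts [hfe, hf₁, by simpa using hf₂, by simpa using hf₃]

theorem pos (harm : HarmonicOffZero f) (hf : ∀ x, 0 ≤ f x) (h0 : 0 < ∑ y ∈ nbrs 0, f y)
    {x : Z2} (hx : x ≠ 0) : 0 < f x := by
  obtain ⟨n, hn⟩ : ∃ n, x.1.natAbs + x.2.natAbs = n + 1 :=
    Nat.exists_eq_add_one.2 (by obtain ⟨p, q⟩ := x; simp [Prod.ext_iff] at hx; omega)
  induction n generalizing x with
  | zero => exact harm.pos_of_nbr_zero hf h0 (by simpa [nbr] using hn)
  | succ n ih =>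
    obtain ⟨y, hxy, hy⟩ := exists_nbr_natAbs_add_natAbs_eq hn
    have hy0 : y ≠ 0 := by rintro rfl; simp at hy
    exact harm.pos_of_nbr_pos hf hx hxy (ih hy0 hy)

end HarmonicOffZero

namespace IsPotentialKernel

variable {a : Z2 → ℝ}

lemma nonneg (ha : IsPotentialKernel a) (x : Z2) : 0 ≤ a x :=
  ge_of_tendsto' (ha x) fun N => by
    rw [sum_sub_distrib]
    exact sub_nonneg.2 (sum_range_srwP_le N x)

lemma tendsto_srwP_sub (ha : IsPotentialKernel a) (x : Z2) :
    Tendsto (fun N => srwP N 0 - srwP N x) atTop (𝓝 0) := by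
  have h := ((ha x).comp (tendsto_add_atTop_nat 1)).sub (ha x)
  simp only [Function.comp_def, sum_range_succ, add_sub_cancel_left, sub_self] at h
  exact h

lemma tendsto_srwP (ha : IsPotentialKernel a) (x : Z2) :
    Tendsto (fun N => srwP N x) atTop (𝓝 0) := by
  have h0 : Tendsto (fun N => srwP N 0) atTop (𝓝 0) :=
    tendsto_zero_of_sum_le_one (fun N => srwP_nonneg N 0) sum_srwP_le_one (ha.tendsto_srwP_sub)
  simpa using h0.sub (ha.tendsto_srwP_sub x)

lemma sum_nbrs (ha : IsPotentialKernel a) (x : Z2) :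
    ∑ y ∈ nbrs x, a y = 4 * a x + 4 * srwP 0 x := by
  have hlhs := tendsto_finsetSum (nbrs x) fun y _ => ha y
  have hrhs := ((ha x).const_mul 4).add (((ha.tendsto_srwP x).const_sub (srwP 0 x)).const_mul 4)
  simp only [← sum_nbrs_sum_range_sub] at hrhs
  simpa using tendsto_nhds_unique hlhs hrhs

lemma harmonicOffZero (ha : IsPotentialKernel a) :
    HarmonicOffZero a :=
  fun x hx => by simp [ha.sum_nbrs, srwP, hx]

lemma pos (ha : IsPotentialKernel a) {x : Z2} (hx : x ≠ 0) :
    0 < a x :=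
  ha.harmonicOffZero.pos ha.nonneg
    (by simp only [ha.sum_nbrs, srwP, if_true]; linarith [ha.nonneg 0]) hx

end IsPotentialKernel

/-- `1/a` is harmonic for `P̂` on `Z2 \ (𝒩 ∪ {0})`, where `𝒩` is the set of the
four neighbours of the origin; equivalently, `1/a(Ŝ_{n ∧ τ̂_𝒩})` is a martingale. -/
theorem one_div_a_harmonic (a : Z2 → ℝ) (ha : IsPotentialKernel a) :
    ∀ x : Z2, x ≠ 0 → ¬ nbr x 0 → 1 / a x = ∑' y : Z2, Phat a x y * (1 / a y) := by
  intro x hx hx0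
  have hterm : ∀ y ∈ nbrs x, Phat a x y * (1 / a y) = 1 / (4 * a x) := by
    intro y hy
    have hy0 : y ≠ 0 := by rintro rfl; exact hx0 (mem_nbrs.1 hy)
    rw [Phat, if_pos ⟨mem_nbrs.1 hy, hx, hy0⟩]
    field_simp [(ha.pos hy0).ne']
  have hsupp : ∀ y ∉ nbrs x, Phat a x y * (1 / a y) = 0 := fun y hy => by
    simp [Phat, ← mem_nbrs, hy]
  rw [tsum_eq_sum hsupp, sum_congr rfl hterm, sum_const, card_nbrs, nsmul_eq_mul]
  field_simp [(ha.pos hx).ne']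
  norm_num
end

section
/- Let X be a recurrent Markov chain on a countable state space \Sigma, and let x \in \Sigma and disjoint A, B \subset \Sigma with x \notin A \cup B. Then P_x[\tau_A < \tau_B] = P_x[\tau_A < \tau_B \mid \tau^+_x > \tau_{A\cup B}]; that is, the events \{\tau_A < \tau_B\} and \{\tau^+_x > \tau_{A \cup B}\} are independent under P_x. -/
open Filter
open scoped Classical

section GeneralChain

variable {σ : Type*}

/-- `mHitLE P S n z = P_z[τ_S ≤ n]` for the Markov chain with transition matrix `P`. -/
noncomputable def mHitLE (P : σ → σ → ℝ) (S : Set σ) : ℕ → σ → ℝ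
  | 0, z => if z ∈ S then 1 else 0
  | n + 1, z => if z ∈ S then 1 else ∑' w, P z w * mHitLE P S n w

/-- `mBeforeLE P A B n z = P_z[τ_A ≤ n, τ_A < τ_B]`. -/
noncomputable def mBeforeLE (P : σ → σ → ℝ) (A B : Set σ) : ℕ → σ → ℝ
  | 0, z => if z ∈ A then 1 else 0
  | n + 1, z =>
      if z ∈ A then 1 else if z ∈ B then 0 else ∑' w, P z w * mBeforeLE P A B n w

/-- `mBeforeAvoidLE P A B x n z = P_z[τ_A ≤ n, τ_A < τ_B, no visit to x before τ_{A∪B}]`. -/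
noncomputable def mBeforeAvoidLE (P : σ → σ → ℝ) (A B : Set σ) (x : σ) : ℕ → σ → ℝ
  | 0, z => if z ∈ A then 1 else 0
  | n + 1, z =>
      if z ∈ A then 1
      else if z ∈ B ∨ z = x then 0
      else ∑' w, P z w * mBeforeAvoidLE P A B x n w

/-- `mReachAvoidLE P S x n z = P_z[τ_S ≤ n, no visit to x before τ_S]`. -/
noncomputable def mReachAvoidLE (P : σ → σ → ℝ) (S : Set σ) (x : σ) : ℕ → σ → ℝ
  | 0, z => if z ∈ S then 1 else 0
  | n + 1, z =>
      if z ∈ S then 1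
      else if z = x then 0
      else ∑' w, P z w * mReachAvoidLE P S x n w

/-! Write `S = A ∪ B` and `u z = P_z[τ_A < τ_B]`. Splitting a path from `z` at its first visit to
`x` (strong Markov property) gives `u z = P_z[τ_A < τ_B, τ_A < τ_x] + P_z[τ_x < τ_S] · u x`, and
recurrence turns `P_z[τ_x < τ_S]` into `1 - P_z[τ_S < τ_x]`. Averaging over the first step from `x`
yields `u x = p + (1 - q) · u x`, that is `p = u x · q`, where
`p = ∑_z P(x,z) P_z[τ_A < τ_B, τ_A < τ_x] = P_x[τ_A < τ_B, τ⁺_x > τ_S]` and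
`q = ∑_z P(x,z) P_z[τ_S < τ_x] = P_x[τ⁺_x > τ_S]`. Finally `q > 0`: the same splitting at `x`
gives `P_x[τ_S ≤ n] ≤ n q`, which recurrence forbids for `q = 0`.

All probabilities are suprema over a time horizon `n` of the finite-horizon recursions, so the
splitting at `x` is proved as two inequalities by induction on the horizons. -/

structure IsStochastic (P : σ → σ → ℝ) : Prop where
  nonneg : ∀ z w, 0 ≤ P z w
  tsum_eq_one : ∀ z, ∑' w, P z w = 1

noncomputable def mBeforeProb (P : σ → σ → ℝ) (A B : Set σ) (z : σ) : ℝ :=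
  ⨆ n, mBeforeLE P A B n z

namespace IsStochastic

variable {P : σ → σ → ℝ}

theorem summable (hP : IsStochastic P) (z : σ) : Summable (P z) := by
  by_contra h
  simpa [tsum_eq_zero_of_not_summable h] using hP.tsum_eq_one z

theorem summable_mul (hP : IsStochastic P) (z : σ) {f : σ → ℝ} {C : ℝ} (hf0 : ∀ w, 0 ≤ f w)
    (hfC : ∀ w, f w ≤ C) :
    Summable fun w => P z w * f w :=
  Summable.of_nonneg_of_le (fun w => mul_nonneg (hP.nonneg z w) (hf0 w))
    (fun w => mul_le_mul_of_nonneg_left (hfC w) (hP.nonneg z w)) ((hP.summable z).mul_right C)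

theorem tsum_mul_mono (hP : IsStochastic P) (z : σ) {f g : σ → ℝ} {C : ℝ} (hf0 : ∀ w, 0 ≤ f w)
    (hfg : ∀ w, f w ≤ g w) (hgC : ∀ w, g w ≤ C) :
    ∑' w, P z w * f w ≤ ∑' w, P z w * g w :=
  Summable.tsum_le_tsum (fun w => mul_le_mul_of_nonneg_left (hfg w) (hP.nonneg z w))
    (hP.summable_mul z hf0 fun w => (hfg w).trans (hgC w))
    (hP.summable_mul z (fun w => (hf0 w).trans (hfg w)) hgC)

theorem tsum_mul_le_one (hP : IsStochastic P) (z : σ) {f : σ → ℝ} (hf0 : ∀ w, 0 ≤ f w)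
    (hf1 : ∀ w, f w ≤ 1) :
    ∑' w, P z w * f w ≤ 1 := by
  simpa [hP.tsum_eq_one z] using hP.tsum_mul_mono z hf0 hf1 fun _ => le_rfl

theorem tsum_mul_add_mul (hP : IsStochastic P) (z : σ) {f g : σ → ℝ} {C : ℝ} (c : ℝ)
    (hf0 : ∀ w, 0 ≤ f w) (hfC : ∀ w, f w ≤ C) (hg0 : ∀ w, 0 ≤ g w) (hgC : ∀ w, g w ≤ C) :
    ∑' w, P z w * (f w + g w * c) = ∑' w, P z w * f w + (∑' w, P z w * g w) * c := by
  rw [← tsum_mul_right, ← Summable.tsum_add (hP.summable_mul z hf0 hfC)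
    ((hP.summable_mul z hg0 hgC).mul_right c)]
  exact tsum_congr fun w => by ring

theorem tendsto_tsum_mul (hP : IsStochastic P) (z : σ) {F : ℕ → σ → ℝ} {G : σ → ℝ} {C : ℝ}
    (hF0 : ∀ n w, 0 ≤ F n w) (hFC : ∀ n w, F n w ≤ C)
    (hFG : ∀ w, Tendsto (F · w) atTop (nhds (G w))) :
    Tendsto (fun n => ∑' w, P z w * F n w) atTop (nhds (∑' w, P z w * G w)) := by
  refine tendsto_tsum_of_dominated_convergence ((hP.summable z).mul_right C)
    (fun w => (hFG w).const_mul (P z w)) (Eventually.of_forall fun n w => ?_)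
  rw [Real.norm_eq_abs, abs_of_nonneg (mul_nonneg (hP.nonneg z w) (hF0 n w))]
  exact mul_le_mul_of_nonneg_left (hFC n w) (hP.nonneg z w)

end IsStochastic

section FiniteHorizon

variable {P : σ → σ → ℝ} {A B : Set σ} {z : σ}

theorem mBeforeLE_of_mem_left (hA : z ∈ A) (n : ℕ) : mBeforeLE P A B n z = 1 := by
  cases n <;> simp [mBeforeLE, hA]

theorem mBeforeLE_zero_of_notMem (hA : z ∉ A) : mBeforeLE P A B 0 z = 0 := by
  simp [mBeforeLE, hA]

theorem mBeforeLE_succ_of_mem_right (hA : z ∉ A) (hB : z ∈ B) (n : ℕ) :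
    mBeforeLE P A B (n + 1) z = 0 := by
  simp [mBeforeLE, hA, hB]

theorem mBeforeLE_succ_of_notMem (hA : z ∉ A) (hB : z ∉ B) (n : ℕ) :
    mBeforeLE P A B (n + 1) z = ∑' w, P z w * mBeforeLE P A B n w := by
  simp [mBeforeLE, hA, hB]

theorem mBeforeLE_mem_Icc (hP : IsStochastic P) (A B : Set σ) (n : ℕ) (z : σ) :
    mBeforeLE P A B n z ∈ Set.Icc 0 1 := by
  induction n generalizing z with
  | zero => by_cases hA : z ∈ A <;> simp [mBeforeLE, hA]
  | succ n ih =>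
    by_cases hA : z ∈ A
    · simp [mBeforeLE_of_mem_left hA]
    by_cases hB : z ∈ B
    · simp [mBeforeLE_succ_of_mem_right hA hB]
    rw [mBeforeLE_succ_of_notMem hA hB]
    exact ⟨tsum_nonneg fun w => mul_nonneg (hP.nonneg z w) (ih w).1,
      hP.tsum_mul_le_one z (fun w => (ih w).1) fun w => (ih w).2⟩

theorem mBeforeLE_nonneg (hP : IsStochastic P) (n : ℕ) (z : σ) : 0 ≤ mBeforeLE P A B n z :=
  (mBeforeLE_mem_Icc hP A B n z).1

theorem mBeforeLE_le_one (hP : IsStochastic P) (n : ℕ) (z : σ) : mBeforeLE P A B n z ≤ 1 :=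
  (mBeforeLE_mem_Icc hP A B n z).2

theorem mBeforeLE_monotone (hP : IsStochastic P) (z : σ) :
    Monotone fun n => mBeforeLE P A B n z := by
  refine monotone_nat_of_le_succ fun n => ?_
  induction n generalizing z with
  | zero =>
    by_cases hA : z ∈ A
    · simp [mBeforeLE_of_mem_left hA]
    rw [mBeforeLE_zero_of_notMem hA]
    exact mBeforeLE_nonneg hP 1 z
  | succ n ih =>
    by_cases hA : z ∈ A
    · simp [mBeforeLE_of_mem_left hA]
    by_cases hB : z ∈ B
    · simp [mBeforeLE_succ_of_mem_right hA hB]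
    rw [mBeforeLE_succ_of_notMem hA hB, mBeforeLE_succ_of_notMem hA hB]
    exact hP.tsum_mul_mono z (mBeforeLE_nonneg hP n) ih (mBeforeLE_le_one hP (n + 1))

theorem mBeforeAvoidLE_eq (A B : Set σ) (x : σ) :
    mBeforeAvoidLE P A B x = mBeforeLE P A (B ∪ {x}) := by
  funext n
  induction n with
  | zero => rfl
  | succ n ih =>
    funext z
    simp only [mBeforeAvoidLE, mBeforeLE, ih, Set.mem_union, Set.mem_singleton_iff]

theorem mReachAvoidLE_eq (S : Set σ) (x : σ) : mReachAvoidLE P S x = mBeforeLE P S {x} := by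
  funext n
  induction n with
  | zero => rfl
  | succ n ih => funext z; simp only [mReachAvoidLE, mBeforeLE, ih, Set.mem_singleton_iff]

theorem mHitLE_eq (S : Set σ) : mHitLE P S = mBeforeLE P S ∅ := by
  funext n
  induction n with
  | zero => rfl
  | succ n ih => funext z; simp [mHitLE, mBeforeLE, ih]

end FiniteHorizon

section FirstVisit

variable {P : σ → σ → ℝ} {A B : Set σ} {x : σ}

theorem mBeforeLE_le_avoid_add_visit (hP : IsStochastic P) (hxA : x ∉ A) (hxB : x ∉ B)
    (n : ℕ) (z : σ) :
    mBeforeLE P A B n z ≤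
      mBeforeLE P A (B ∪ {x}) n z + mBeforeLE P {x} (A ∪ B) n z * mBeforeLE P A B n x := by
  have hvisit : ∀ k w, 0 ≤ mBeforeLE P {x} (A ∪ B) k w * mBeforeLE P A B k x := fun k w =>
    mul_nonneg (mBeforeLE_nonneg hP k w) (mBeforeLE_nonneg hP k x)
  induction n generalizing z with
  | zero => exact le_add_of_nonneg_right (hvisit 0 z)
  | succ n ih =>
    by_cases hA : z ∈ A
    · rw [mBeforeLE_of_mem_left hA, mBeforeLE_of_mem_left hA]
      exact le_add_of_nonneg_right (hvisit _ z)
    by_cases hB : z ∈ B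
    · rw [mBeforeLE_succ_of_mem_right hA hB]
      exact add_nonneg (mBeforeLE_nonneg hP _ z) (hvisit _ z)
    obtain rfl | hzx := eq_or_ne z x
    · rw [mBeforeLE_succ_of_mem_right hA (Set.mem_union_right B (Set.mem_singleton z)),
        mBeforeLE_of_mem_left (Set.mem_singleton z), zero_add, one_mul]
    have hzx' : z ∉ ({x} : Set σ) := hzx
    rw [mBeforeLE_succ_of_notMem hA hB, mBeforeLE_succ_of_notMem hA (by simp [hB, hzx]),
      mBeforeLE_succ_of_notMem hzx' (by simp [hA, hB]),
      ← hP.tsum_mul_add_mul z _ (mBeforeLE_nonneg hP n) (mBeforeLE_le_one hP n)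
        (mBeforeLE_nonneg hP n) (mBeforeLE_le_one hP n)]
    refine hP.tsum_mul_mono z (C := 1 + 1) (mBeforeLE_nonneg hP n) (fun w => (ih w).trans ?_)
      fun w => add_le_add (mBeforeLE_le_one hP n w)
        (mul_le_one₀ (mBeforeLE_le_one hP n w) (mBeforeLE_nonneg hP _ x) (mBeforeLE_le_one hP _ x))
    gcongr
    · exact mBeforeLE_nonneg hP n w
    · exact mBeforeLE_monotone hP x n.le_succ

theorem avoid_add_visit_le_mBeforeLE (hP : IsStochastic P) (hxA : x ∉ A) (hxB : x ∉ B)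
    (n m : ℕ) (z : σ) :
    mBeforeLE P A (B ∪ {x}) n z + mBeforeLE P {x} (A ∪ B) n z * mBeforeLE P A B m x ≤
      mBeforeLE P A B (n + m) z := by
  induction n generalizing z with
  | zero =>
    obtain rfl | hzx := eq_or_ne z x
    · rw [mBeforeLE_zero_of_notMem hxA, mBeforeLE_of_mem_left (Set.mem_singleton z), zero_add,
        one_mul, zero_add]
    have hzx' : z ∉ ({x} : Set σ) := hzx
    by_cases hA : z ∈ A
    · simp [mBeforeLE_of_mem_left hA, mBeforeLE_zero_of_notMem hzx']
    · simpa [mBeforeLE_zero_of_notMem hA, mBeforeLE_zero_of_notMem hzx']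
        using mBeforeLE_nonneg hP (0 + m) z
  | succ n ih =>
    obtain rfl | hzx := eq_or_ne z x
    · rw [mBeforeLE_succ_of_mem_right hxA (Set.mem_union_right B (Set.mem_singleton z)),
        mBeforeLE_of_mem_left (Set.mem_singleton z), zero_add, one_mul]
      exact mBeforeLE_monotone hP z (by omega)
    have hzx' : z ∉ ({x} : Set σ) := hzx
    by_cases hA : z ∈ A
    · simp [mBeforeLE_of_mem_left hA, mBeforeLE_succ_of_mem_right hzx' (Set.mem_union_left B hA)]
    by_cases hB : z ∈ B
    · rw [mBeforeLE_succ_of_mem_right hA (Set.mem_union_left {x} hB),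
        mBeforeLE_succ_of_mem_right hzx' (Set.mem_union_right A hB), zero_mul, add_zero]
      exact mBeforeLE_nonneg hP _ z
    rw [mBeforeLE_succ_of_notMem hA (by simp [hB, hzx]),
      mBeforeLE_succ_of_notMem hzx' (by simp [hA, hB]), Nat.add_right_comm,
      mBeforeLE_succ_of_notMem hA hB,
      ← hP.tsum_mul_add_mul z _ (mBeforeLE_nonneg hP n) (mBeforeLE_le_one hP n)
        (mBeforeLE_nonneg hP n) (mBeforeLE_le_one hP n)]
    exact hP.tsum_mul_mono z (fun w => add_nonneg (mBeforeLE_nonneg hP n w)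
      (mul_nonneg (mBeforeLE_nonneg hP n w) (mBeforeLE_nonneg hP m x))) ih
      (mBeforeLE_le_one hP (n + m))

end FirstVisit

section Limit

variable {P : σ → σ → ℝ} {A B : Set σ} {x : σ}

theorem iSup_mBeforeLE (A B : Set σ) (z : σ) :
    (⨆ n, mBeforeLE P A B n z) = mBeforeProb P A B z :=
  rfl

theorem bddAbove_range_mBeforeLE (hP : IsStochastic P) (z : σ) :
    BddAbove (Set.range fun n => mBeforeLE P A B n z) :=
  ⟨1, Set.forall_mem_range.2 fun n => mBeforeLE_le_one hP n z⟩

theorem le_mBeforeProb (hP : IsStochastic P) (n : ℕ) (z : σ) :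
    mBeforeLE P A B n z ≤ mBeforeProb P A B z :=
  le_ciSup (bddAbove_range_mBeforeLE hP z) n

theorem mBeforeProb_nonneg (hP : IsStochastic P) (z : σ) : 0 ≤ mBeforeProb P A B z :=
  (mBeforeLE_nonneg hP 0 z).trans (le_mBeforeProb hP 0 z)

theorem mBeforeProb_le_one (hP : IsStochastic P) (z : σ) : mBeforeProb P A B z ≤ 1 :=
  ciSup_le fun n => mBeforeLE_le_one hP n z

theorem tendsto_mBeforeLE (hP : IsStochastic P) (z : σ) :
    Tendsto (fun n => mBeforeLE P A B n z) atTop (nhds (mBeforeProb P A B z)) :=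
  tendsto_atTop_ciSup (mBeforeLE_monotone hP z) (bddAbove_range_mBeforeLE hP z)

theorem mBeforeProb_eq_tsum (hP : IsStochastic P) {z : σ} (hA : z ∉ A) (hB : z ∉ B) :
    mBeforeProb P A B z = ∑' w, P z w * mBeforeProb P A B w := by
  refine tendsto_nhds_unique ((tendsto_mBeforeLE hP z).comp (tendsto_add_atTop_nat 1)) ?_
  simp only [Function.comp_def, mBeforeLE_succ_of_notMem hA hB]
  exact hP.tendsto_tsum_mul z (mBeforeLE_nonneg hP) (mBeforeLE_le_one hP) (tendsto_mBeforeLE hP)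

theorem mBeforeProb_eq_avoid_add_visit (hP : IsStochastic P) (hxA : x ∉ A) (hxB : x ∉ B)
    (z : σ) :
    mBeforeProb P A B z =
      mBeforeProb P A (B ∪ {x}) z + mBeforeProb P {x} (A ∪ B) z * mBeforeProb P A B x := by
  apply le_antisymm
  · refine ciSup_le fun n => (mBeforeLE_le_avoid_add_visit hP hxA hxB n z).trans ?_
    exact add_le_add (le_mBeforeProb hP n z) (mul_le_mul (le_mBeforeProb hP n z)
      (le_mBeforeProb hP n x) (mBeforeLE_nonneg hP n x) (mBeforeProb_nonneg hP z))
  · refine le_of_tendsto' ((tendsto_mBeforeLE hP z).add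
      ((tendsto_mBeforeLE hP z).mul (tendsto_mBeforeLE hP x))) fun n => ?_
    exact (avoid_add_visit_le_mBeforeLE hP hxA hxB n n z).trans (le_mBeforeProb hP _ z)

theorem mBeforeProb_singleton_eq_one_sub (hP : IsStochastic P) {S : Set σ} (hxS : x ∉ S)
    (hrec : ∀ z, mBeforeProb P S ∅ z = 1) (z : σ) :
    mBeforeProb P {x} S z = 1 - mBeforeProb P S {x} z := by
  have h := mBeforeProb_eq_avoid_add_visit hP hxS (Set.notMem_empty x) z
  rw [hrec, hrec, Set.empty_union, Set.union_empty, mul_one] at h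
  linarith

theorem mBeforeLE_empty_le_mul_tsum (hP : IsStochastic P) {S : Set σ} (hxS : x ∉ S) (n : ℕ) :
    mBeforeLE P S ∅ n x ≤ n * ∑' z, P x z * mBeforeProb P S {x} z := by
  induction n with
  | zero => simp [mBeforeLE_zero_of_notMem hxS]
  | succ n ih =>
    have hsplit : ∀ z, mBeforeLE P S ∅ n z ≤
        mBeforeLE P S {x} n z + mBeforeLE P {x} S n z * mBeforeLE P S ∅ n x := by
      simpa using mBeforeLE_le_avoid_add_visit hP hxS (Set.notMem_empty x) n
    rw [mBeforeLE_succ_of_notMem hxS (Set.notMem_empty x)]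
    calc ∑' z, P x z * mBeforeLE P S ∅ n z
        ≤ ∑' z, P x z * (mBeforeLE P S {x} n z + mBeforeLE P {x} S n z * mBeforeLE P S ∅ n x) :=
          hP.tsum_mul_mono x (C := 1 + 1) (mBeforeLE_nonneg hP n) hsplit fun z =>
            add_le_add (mBeforeLE_le_one hP n z) (mul_le_one₀ (mBeforeLE_le_one hP n z)
              (mBeforeLE_nonneg hP n x) (mBeforeLE_le_one hP n x))
      _ = ∑' z, P x z * mBeforeLE P S {x} n z +
            (∑' z, P x z * mBeforeLE P {x} S n z) * mBeforeLE P S ∅ n x :=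
          hP.tsum_mul_add_mul x _ (mBeforeLE_nonneg hP n) (mBeforeLE_le_one hP n)
            (mBeforeLE_nonneg hP n) (mBeforeLE_le_one hP n)
      _ ≤ ∑' z, P x z * mBeforeProb P S {x} z + 1 * (n * ∑' z, P x z * mBeforeProb P S {x} z) :=
          add_le_add
            (hP.tsum_mul_mono x (mBeforeLE_nonneg hP n) (le_mBeforeProb hP n)
              (mBeforeProb_le_one hP))
            (mul_le_mul (hP.tsum_mul_le_one x (mBeforeLE_nonneg hP n) (mBeforeLE_le_one hP n))
              ih (mBeforeLE_nonneg hP n x) zero_le_one)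
      _ = (n + 1 : ℕ) * ∑' z, P x z * mBeforeProb P S {x} z := by push_cast; ring

theorem tsum_mul_mBeforeProb_pos (hP : IsStochastic P) {S : Set σ} (hxS : x ∉ S)
    (hx : mBeforeProb P S ∅ x = 1) : 0 < ∑' z, P x z * mBeforeProb P S {x} z := by
  by_contra! hq
  have : mBeforeProb P S ∅ x ≤ 0 := ciSup_le fun n =>
    (mBeforeLE_empty_le_mul_tsum hP hxS n).trans (mul_nonpos_of_nonneg_of_nonpos n.cast_nonneg hq)
  linarith

end Limit

theorem before_indep_of_avoid_return_general (P : σ → σ → ℝ)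
    (hPnn : ∀ z w, 0 ≤ P z w) (hProw : ∀ z, ∑' w, P z w = 1)
    (A B : Set σ) (x : σ) (hx : x ∉ A ∪ B)
    (hrec : ∀ z : σ, (⨆ n : ℕ, mHitLE P (A ∪ B) n z) = 1) :
    (∑' z, P x z * ⨆ n, mBeforeAvoidLE P A B x n z) =
        (⨆ n, mBeforeLE P A B n x) * (∑' z, P x z * ⨆ n, mReachAvoidLE P (A ∪ B) x n z) ∧
      (⨆ n, mBeforeLE P A B n x) =
        (∑' z, P x z * ⨆ n, mBeforeAvoidLE P A B x n z) /
          (∑' z, P x z * ⨆ n, mReachAvoidLE P (A ∪ B) x n z) := by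
  have hP : IsStochastic P := ⟨hPnn, hProw⟩
  simp only [mHitLE_eq, iSup_mBeforeLE] at hrec
  rw [mBeforeAvoidLE_eq, mReachAvoidLE_eq]
  simp only [iSup_mBeforeLE]
  obtain ⟨hxA, hxB⟩ : x ∉ A ∧ x ∉ B := by simpa using hx
  set u := mBeforeProb P A B x
  have hq := tsum_mul_mBeforeProb_pos hP hx (hrec x)
  have hsum : ∀ {C D : Set σ}, Summable fun z => P x z * mBeforeProb P C D z := fun {_ _} =>
    hP.summable_mul x (mBeforeProb_nonneg hP) (mBeforeProb_le_one hP)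
  have hu : u = ∑' z, P x z * mBeforeProb P A (B ∪ {x}) z +
      (1 - ∑' z, P x z * mBeforeProb P (A ∪ B) {x} z) * u := by
    calc u = ∑' z, P x z * mBeforeProb P A B z := mBeforeProb_eq_tsum hP hxA hxB
      _ = ∑' z, (P x z * mBeforeProb P A (B ∪ {x}) z + P x z * u -
            P x z * mBeforeProb P (A ∪ B) {x} z * u) := by
          refine tsum_congr fun z => ?_
          rw [mBeforeProb_eq_avoid_add_visit hP hxA hxB z,
            mBeforeProb_singleton_eq_one_sub hP hx hrec z]
          ring
      _ = _ := by
          rw [Summable.tsum_sub (hsum.add ((hP.summable x).mul_right u)) (hsum.mul_right u),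
            Summable.tsum_add hsum ((hP.summable x).mul_right u), tsum_mul_right, tsum_mul_right,
            hP.tsum_eq_one x]
          ring
  refine ⟨by linear_combination -hu, ?_⟩
  rw [eq_div_iff hq.ne']
  linear_combination hu

/-- for a recurrent Markov chain on a countable state space, disjoint `A, B`
and `x ∉ A ∪ B`, the events `{τ_A < τ_B}` and `{τ⁺_x > τ_{A∪B}}` are independent under
`P_x`; in particular `P_x[τ_A < τ_B] = P_x[τ_A < τ_B ∣ τ⁺_x > τ_{A∪B}]`.
Here `P_x[τ_A < τ_B, τ⁺_x > τ_{A∪B}] = ∑_z P(x,z) P_z[reach A before B avoiding x]` and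
`P_x[τ⁺_x > τ_{A∪B}] = ∑_z P(x,z) P_z[reach A∪B avoiding x]`. -/
theorem before_indep_of_avoid_return [Countable σ] (P : σ → σ → ℝ)
    (hPnn : ∀ z w, 0 ≤ P z w) (hProw : ∀ z, ∑' w, P z w = 1)
    (A B : Set σ) (hAB : Disjoint A B) (x : σ) (hx : x ∉ A ∪ B)
    (hrec : ∀ z : σ, (⨆ n : ℕ, mHitLE P (A ∪ B) n z) = 1) :
    (∑' z, P x z * ⨆ n, mBeforeAvoidLE P A B x n z) =
        (⨆ n, mBeforeLE P A B n x) * (∑' z, P x z * ⨆ n, mReachAvoidLE P (A ∪ B) x n z) ∧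
      (⨆ n, mBeforeLE P A B n x) =
        (∑' z, P x z * ⨆ n, mBeforeAvoidLE P A B x n z) /
          (∑' z, P x z * ⨆ n, mReachAvoidLE P (A ∪ B) x n z) :=
  before_indep_of_avoid_return_general P hPnn hProw A B x hx hrec

end GeneralChain
end
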